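/- For all natural numbers M, N and all i ≥ 0, the following identities hold in A_{M+N}: h_i(B₁ ∪ B₂) = Σ_{k+ℓ=i} h_k(B₁)·h_ℓ(B₂), and h̃_i(B₁ ∪ B₂) = Σ_{k+ℓ=i} ( h̃_k(B₁)·h_ℓ(B₂) + h_ℓ(B₁)·h̃_k(B₂) ). (This is the two-alphabet form of the coproduct formulas Δh_i = Σ_{k+ℓ=i} h_k ⊗ h_ℓ and Δh̃_i = Σ_{k+ℓ=i} (h̃_k ⊗ h_ℓ + h_ℓ ⊗ h̃_k) for the homogeneous symmetric functions in superspace.) -/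

import Mathlib

/-!
**Statement 3.** Two-alphabet form of the coproduct formulas for the homogeneous
symmetric functions in superspace:
`h_i(B₁ ∪ B₂) = Σ_{k+ℓ=i} h_k(B₁) h_ℓ(B₂)` and
`h̃_i(B₁ ∪ B₂) = Σ_{k+ℓ=i} (h̃_k(B₁) h_ℓ(B₂) + h_ℓ(B₁) h̃_k(B₂))`.
-/

open TensorProduct

set_option synthInstance.maxHeartbeats 1000000
set_option maxHeartbeats 1000000

noncomputable section

/-- The ring of polynomials in superspace in `N` variables. -/
abbrev SuperAlg (N : ℕ) : Type :=
  MvPolynomial (Fin N) ℚ ⊗[ℚ] ExteriorAlgebra ℚ (Fin N → ℚ)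

/-- The (bosonic) variable `x_i`. -/
def sx {N : ℕ} (i : Fin N) : SuperAlg N := MvPolynomial.X i ⊗ₜ[ℚ] 1

/-- The (fermionic) variable `θ_i`. -/
def sθ {N : ℕ} (i : Fin N) : SuperAlg N :=
  1 ⊗ₜ[ℚ] ExteriorAlgebra.ι ℚ (Pi.single i 1)

/-- The homogeneous symmetric function in superspace `h_r(B)` on the alphabet `B`:
the sum of all monomials of degree `r` in the variables of `B`. -/
def hsym {N : ℕ} (B : Finset (Fin N)) (r : ℕ) : SuperAlg N :=
  (∑ c ∈ B.finsuppAntidiag r, ∏ j, MvPolynomial.X j ^ c j) ⊗ₜ[ℚ] 1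

/-- The fermionic homogeneous symmetric function in superspace `h̃_k(B)` on the
alphabet `B`: `h̃_k(B) = Σ_{i ∈ B} Σ_{|c| = k, supp c ⊆ B} (c_i + 1) θ_i ∏_j x_j^{c_j}`. -/
def hsymTilde {N : ℕ} (B : Finset (Fin N)) (k : ℕ) : SuperAlg N :=
  ∑ i ∈ B, ∑ c ∈ B.finsuppAntidiag k,
    (c i + 1) • (sθ i * ((∏ j, MvPolynomial.X j ^ c j) ⊗ₜ[ℚ] 1))


open Finset in

lemma finsuppAntidiag_union_sum {ι : Type*} [DecidableEq ι] {M : Type*} [AddCommMonoid M]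
    {B₁ B₂ : Finset ι} (hd : Disjoint B₁ B₂) (r : ℕ) (f : (ι →₀ ℕ) → M) :
    ∑ c ∈ (B₁ ∪ B₂).finsuppAntidiag r, f c
      = ∑ p ∈ antidiagonal r, ∑ c₁ ∈ B₁.finsuppAntidiag p.1,
          ∑ c₂ ∈ B₂.finsuppAntidiag p.2, f (c₁ + c₂) := by
  classical
  have hsplit : ∀ c ∈ (B₁ ∪ B₂).finsuppAntidiag r,
      c.filter (· ∈ B₁) + c.filter (· ∈ B₂) = c := by
    intro c hc
    rw [Finset.mem_finsuppAntidiag'] at hc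
    ext a
    simp only [Finsupp.add_apply, Finsupp.filter_apply]
    by_cases h1 : a ∈ B₁
    · have h2 : a ∉ B₂ := fun h => (Finset.disjoint_left.mp hd h1) h
      simp [h1, h2]
    · by_cases h2 : a ∈ B₂
      · simp [h1, h2]
      · have : c a = 0 := by
          by_contra h
          have := hc.2 (Finsupp.mem_support_iff.mpr h)
          simp [h1, h2] at this
        simp [h1, h2, this]
  have hprod : ∀ p : ℕ × ℕ,
      (∑ c₁ ∈ B₁.finsuppAntidiag p.1, ∑ c₂ ∈ B₂.finsuppAntidiag p.2, f (c₁ + c₂))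
        = ∑ q ∈ B₁.finsuppAntidiag p.1 ×ˢ B₂.finsuppAntidiag p.2, f (q.1 + q.2) :=
    fun p => (Finset.sum_product' _ _ (fun c₁ c₂ => f (c₁ + c₂))).symm
  rw [Finset.sum_congr rfl fun p _ => hprod p,
    Finset.sum_sigma' (antidiagonal r) (fun p => B₁.finsuppAntidiag p.1 ×ˢ B₂.finsuppAntidiag p.2)
      (fun _ q => f (q.1 + q.2))]
  refine Finset.sum_nbij'
    (fun c => ⟨((c.filter (· ∈ B₁)).sum fun _ x => x, (c.filter (· ∈ B₂)).sum fun _ x => x),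
        (c.filter (· ∈ B₁), c.filter (· ∈ B₂))⟩)
    (fun x => x.2.1 + x.2.2) ?_ ?_ ?_ ?_ ?_
  · intro c hc
    have hc' := hc
    rw [Finset.mem_finsuppAntidiag'] at hc'
    refine Finset.mem_sigma.mpr ⟨?_, ?_⟩
    · rw [Finset.HasAntidiagonal.mem_antidiagonal]
      have := hsplit c hc
      calc ((c.filter (· ∈ B₁)).sum fun _ x => x) + ((c.filter (· ∈ B₂)).sum fun _ x => x)
          = ((c.filter (· ∈ B₁) + c.filter (· ∈ B₂)).sum fun _ x => x) := by
            rw [Finsupp.sum_add_index'] <;> simp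
        _ = r := by rw [this, hc'.1]
    · refine Finset.mem_product.mpr ⟨?_, ?_⟩ <;>
      · rw [Finset.mem_finsuppAntidiag']
        refine ⟨rfl, ?_⟩
        intro a ha
        rw [Finsupp.support_filter, Finset.mem_filter] at ha
        exact ha.2
  · intro x hx
    rw [Finset.mem_sigma, Finset.HasAntidiagonal.mem_antidiagonal, Finset.mem_product] at hx
    obtain ⟨hp, h1, h2⟩ := hx
    rw [Finset.mem_finsuppAntidiag'] at h1 h2 ⊢
    constructor
    · rw [Finsupp.sum_add_index'] <;> simp [h1.1, h2.1, hp]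
    · refine (Finsupp.support_add).trans ?_
      exact Finset.union_subset_union h1.2 h2.2
  · intro c hc
    exact hsplit c hc
  · intro x hx
    rw [Finset.mem_sigma, Finset.HasAntidiagonal.mem_antidiagonal, Finset.mem_product] at hx
    obtain ⟨hp, h1, h2⟩ := hx
    rw [Finset.mem_finsuppAntidiag'] at h1 h2
    have e1 : (x.2.1 + x.2.2).filter (· ∈ B₁) = x.2.1 := by
      ext a
      simp only [Finsupp.filter_apply, Finsupp.add_apply]
      by_cases h : a ∈ B₁
      · have : x.2.2 a = 0 := by
          by_contra hz
          exact (Finset.disjoint_left.mp hd h) (h2.2 (Finsupp.mem_support_iff.mpr hz))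
        simp [h, this]
      · have : x.2.1 a = 0 := by
          by_contra hz
          exact h (h1.2 (Finsupp.mem_support_iff.mpr hz))
        simp [h, this]
    have e2 : (x.2.1 + x.2.2).filter (· ∈ B₂) = x.2.2 := by
      ext a
      simp only [Finsupp.filter_apply, Finsupp.add_apply]
      by_cases h : a ∈ B₂
      · have : x.2.1 a = 0 := by
          by_contra hz
          exact (Finset.disjoint_right.mp hd h) (h1.2 (Finsupp.mem_support_iff.mpr hz))
        simp [h, this]
      · have : x.2.2 a = 0 := by
          by_contra hz
          exact h (h2.2 (Finsupp.mem_support_iff.mpr hz))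
        simp [h, this]
    obtain ⟨⟨k, l⟩, c₁, c₂⟩ := x
    simp only at e1 e2 h1 h2 ⊢
    rw [e1, e2, h1.1, h2.1]
  · intro c hc
    rw [hsplit c hc]


section Aux

variable {N : ℕ}

/-- Elements of the form `P ⊗ 1` are central in `SuperAlg N`. -/
lemma tmul_one_central (P : MvPolynomial (Fin N) ℚ) (z : SuperAlg N) :
    (P ⊗ₜ[ℚ] (1 : ExteriorAlgebra ℚ (Fin N → ℚ))) * z
      = z * (P ⊗ₜ[ℚ] (1 : ExteriorAlgebra ℚ (Fin N → ℚ))) := by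
  induction z using TensorProduct.induction_on with
  | zero => simp
  | tmul q w => simp [Algebra.TensorProduct.tmul_mul_tmul, mul_comm]
  | add a b ha hb => rw [mul_add, add_mul, ha, hb]

lemma prod_pow_add (c₁ c₂ : Fin N →₀ ℕ) :
    (∏ j, MvPolynomial.X (R := ℚ) j ^ (c₁ + c₂) j)
      = (∏ j, MvPolynomial.X j ^ c₁ j) * (∏ j, MvPolynomial.X j ^ c₂ j) := by
  rw [← Finset.prod_mul_distrib]
  exact Finset.prod_congr rfl fun j _ => by rw [Finsupp.add_apply, pow_add]

lemma apply_eq_zero_of_mem_antidiag {B : Finset (Fin N)} {k : ℕ} {c : Fin N →₀ ℕ}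
    (hc : c ∈ B.finsuppAntidiag k) {a : Fin N} (ha : a ∉ B) : c a = 0 := by
  rw [Finset.mem_finsuppAntidiag] at hc
  by_contra h
  exact ha (hc.2 (Finsupp.mem_support_iff.mpr h))

lemma hsym_union {B₁ B₂ : Finset (Fin N)} (hd : Disjoint B₁ B₂) (r : ℕ) :
    hsym (B₁ ∪ B₂) r = ∑ p ∈ Finset.HasAntidiagonal.antidiagonal r, hsym B₁ p.1 * hsym B₂ p.2 := by
  unfold hsym
  have : ∀ p : ℕ × ℕ,
      ((∑ c ∈ B₁.finsuppAntidiag p.1, ∏ j, MvPolynomial.X (R := ℚ) j ^ c j) ⊗ₜ[ℚ]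
          (1 : ExteriorAlgebra ℚ (Fin N → ℚ))) *
        ((∑ c ∈ B₂.finsuppAntidiag p.2, ∏ j, MvPolynomial.X j ^ c j) ⊗ₜ[ℚ] 1)
        = ((∑ c₁ ∈ B₁.finsuppAntidiag p.1, ∑ c₂ ∈ B₂.finsuppAntidiag p.2,
            ∏ j, MvPolynomial.X j ^ (c₁ + c₂) j) ⊗ₜ[ℚ] 1) := by
    intro p
    rw [Algebra.TensorProduct.tmul_mul_tmul, mul_one, Finset.sum_mul_sum]
    congr 1
    exact Finset.sum_congr rfl fun c₁ _ => Finset.sum_congr rfl fun c₂ _ =>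
      (prod_pow_add c₁ c₂).symm
  rw [Finset.sum_congr rfl fun p _ => this p, ← TensorProduct.sum_tmul,
    finsuppAntidiag_union_sum hd r (fun c => ∏ j, MvPolynomial.X j ^ c j)]

lemma sum_antidiagonal_swap' {M : Type*} [AddCommMonoid M] (k : ℕ) (g : ℕ → ℕ → M) :
    ∑ p ∈ Finset.HasAntidiagonal.antidiagonal k, g p.1 p.2 = ∑ p ∈ Finset.HasAntidiagonal.antidiagonal k, g p.2 p.1 := by
  conv_lhs => rw [← Finset.HasAntidiagonal.map_swap_antidiagonal]
  rw [Finset.sum_map]; simp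

lemma hsymTilde_union {B₁ B₂ : Finset (Fin N)} (hd : Disjoint B₁ B₂) (k : ℕ) :
    hsymTilde (B₁ ∪ B₂) k = ∑ p ∈ Finset.HasAntidiagonal.antidiagonal k,
      (hsymTilde B₁ p.1 * hsym B₂ p.2 + hsym B₁ p.2 * hsymTilde B₂ p.1) := by
  classical
  rw [Finset.sum_add_distrib]
  conv_lhs => unfold hsymTilde
  rw [Finset.sum_union hd]
  congr 1
  -- first chunk : sum over a ∈ B₁
  · rw [Finset.sum_congr rfl fun a (ha : a ∈ B₁) =>
      finsuppAntidiag_union_sum hd k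
        (fun c => (c a + 1) • (sθ a * ((∏ j, MvPolynomial.X j ^ c j) ⊗ₜ[ℚ] 1))),
      Finset.sum_comm]
    refine Finset.sum_congr rfl fun p _ => ?_
    unfold hsymTilde hsym
    rw [Finset.sum_mul]
    refine Finset.sum_congr rfl fun a ha => ?_
    rw [Finset.sum_mul]
    refine Finset.sum_congr rfl fun c₁ hc₁ => ?_
    rw [smul_mul_assoc, mul_assoc, Algebra.TensorProduct.tmul_mul_tmul, mul_one,
      Finset.mul_sum, TensorProduct.sum_tmul, Finset.mul_sum, Finset.smul_sum]
    refine Finset.sum_congr rfl fun c₂ hc₂ => ?_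
    have hz : c₂ a = 0 :=
      apply_eq_zero_of_mem_antidiag hc₂ (Finset.disjoint_left.mp hd ha)
    rw [prod_pow_add c₁ c₂, Finsupp.add_apply, hz, add_zero]
  -- second chunk : sum over a ∈ B₂
  · rw [Finset.sum_congr rfl fun a (ha : a ∈ B₂) =>
      finsuppAntidiag_union_sum hd k
        (fun c => (c a + 1) • (sθ a * ((∏ j, MvPolynomial.X j ^ c j) ⊗ₜ[ℚ] 1))),
      Finset.sum_comm]
    rw [show (∑ p ∈ Finset.HasAntidiagonal.antidiagonal k, hsym B₁ p.2 * hsymTilde B₂ p.1)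
        = ∑ p ∈ Finset.HasAntidiagonal.antidiagonal k, hsym B₁ p.1 * hsymTilde B₂ p.2 from
      sum_antidiagonal_swap' k (fun a b => hsym B₁ b * hsymTilde B₂ a)]
    refine Finset.sum_congr rfl fun p _ => ?_
    have step1 : ∀ a ∈ B₂, ∀ c₁ ∈ B₁.finsuppAntidiag p.1, ∀ c₂ ∈ B₂.finsuppAntidiag p.2,
        ((c₁ + c₂) a + 1) • (sθ a * ((∏ j, MvPolynomial.X j ^ (c₁ + c₂) j) ⊗ₜ[ℚ] 1))
          = ((c₂ a + 1) • (sθ a * ((∏ j, MvPolynomial.X j ^ c₂ j) ⊗ₜ[ℚ] 1)))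
              * ((∏ j, MvPolynomial.X j ^ c₁ j) ⊗ₜ[ℚ] 1) := by
      intro a ha c₁ hc₁ c₂ hc₂
      have hz : c₁ a = 0 :=
        apply_eq_zero_of_mem_antidiag hc₁ (Finset.disjoint_right.mp hd ha)
      have hP : (∏ j, MvPolynomial.X (R := ℚ) j ^ (c₁ + c₂) j)
          = (∏ j, MvPolynomial.X j ^ c₂ j) * (∏ j, MvPolynomial.X j ^ c₁ j) := by
        rw [prod_pow_add]; ring
      rw [hP, Finsupp.add_apply, hz, zero_add, smul_mul_assoc, mul_assoc,
        Algebra.TensorProduct.tmul_mul_tmul, mul_one]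
    rw [Finset.sum_congr rfl fun a ha => Finset.sum_congr rfl fun c₁ hc₁ =>
      Finset.sum_congr rfl fun c₂ hc₂ => step1 a ha c₁ hc₁ c₂ hc₂]
    have step2 : ∀ a ∈ B₂,
        (∑ c₁ ∈ B₁.finsuppAntidiag p.1, ∑ c₂ ∈ B₂.finsuppAntidiag p.2,
          ((c₂ a + 1) • (sθ a * ((∏ j, MvPolynomial.X j ^ c₂ j) ⊗ₜ[ℚ] 1)))
            * ((∏ j, MvPolynomial.X j ^ c₁ j) ⊗ₜ[ℚ] 1))
          = (∑ c₂ ∈ B₂.finsuppAntidiag p.2,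
              (c₂ a + 1) • (sθ a * ((∏ j, MvPolynomial.X j ^ c₂ j) ⊗ₜ[ℚ] 1)))
            * ((∑ c₁ ∈ B₁.finsuppAntidiag p.1, ∏ j, MvPolynomial.X j ^ c₁ j) ⊗ₜ[ℚ] 1) := by
      intro a _
      rw [Finset.sum_comm, Finset.sum_mul]
      exact Finset.sum_congr rfl fun c₂ _ => by rw [TensorProduct.sum_tmul, Finset.mul_sum]
    rw [Finset.sum_congr rfl step2, ← Finset.sum_mul]
    rw [show (hsym B₁ p.1 * hsymTilde B₂ p.2) = hsymTilde B₂ p.2 * hsym B₁ p.1 from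
      tmul_one_central _ _]
    rfl

end Aux

theorem hsym_superspace_coproduct (M N : ℕ) (i : ℕ) :
    (hsym ((Finset.univ.image (Fin.castAdd N)) ∪ (Finset.univ.image (Fin.natAdd M))) i
        = ∑ p ∈ Finset.HasAntidiagonal.antidiagonal i,
            hsym (Finset.univ.image (Fin.castAdd N)) p.1 *
              hsym (Finset.univ.image (Fin.natAdd M)) p.2) ∧
    (hsymTilde ((Finset.univ.image (Fin.castAdd N)) ∪ (Finset.univ.image (Fin.natAdd M))) i
        = ∑ p ∈ Finset.HasAntidiagonal.antidiagonal i,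
            (hsymTilde (Finset.univ.image (Fin.castAdd N)) p.1 *
                hsym (Finset.univ.image (Fin.natAdd M)) p.2
              + hsym (Finset.univ.image (Fin.castAdd N)) p.2 *
                  hsymTilde (Finset.univ.image (Fin.natAdd M)) p.1)) := by
  have hd : Disjoint (Finset.univ.image (Fin.castAdd (n := M) N))
      (Finset.univ.image (Fin.natAdd (m := N) M)) := by
    rw [Finset.disjoint_left]
    rintro a h1 h2
    simp only [Finset.mem_image, Finset.mem_univ, true_and] at h1 h2
    obtain ⟨x, rfl⟩ := h1
    obtain ⟨y, hy⟩ := h2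
    have := congrArg Fin.val hy
    simp only [Fin.natAdd, Fin.castAdd, Fin.castLE] at this
    omega
  exact ⟨hsym_union hd i, hsymTilde_union hd i⟩

end
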